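/- Let 1 < q < 2, m, a, b > 0, γ ∈ (0, 2/b]. There exist c, M > 0 such that the radial function ψ(x) = γ ln(1/|x|) + c(1-|x|^{2-q}) + M satisfies -Δψ + a e^{bψ} - m|∇ψ|^q ≥ 0 pointwise in B₁ \ {0} ⊂ ℝ². -/

import Mathlib

open Real

/-- Laplacian of a function on `ℝⁿ` as the sum of pure second derivatives. -/
noncomputable def laplacian {n : ℕ} (u : EuclideanSpace ℝ (Fin n) → ℝ)
    (x : EuclideanSpace ℝ (Fin n)) : ℝ :=
  ∑ i : Fin n, iteratedFDeriv ℝ 2 u x ![EuclideanSpace.single i 1, EuclideanSpace.single i 1]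

/-!
For a radial function `ψ = φ ∘ ‖·‖` on the plane, `Δψ = φ'' + φ'/r` and `|∇ψ| = |φ'|`. The
logarithm is harmonic there, so for `φ(r) = γ log(1/r) + c(1 - r^(2-q)) + M` one gets
`-Δψ = c(2-q)² r^(-q)` and `|∇ψ| = (γ + c(2-q) r^(2-q)) / r`. Where `c(2-q) r^(2-q) ≤ 1` the
gradient term is at most `m(γ+1)^q r^(-q)`, which `-Δψ` absorbs once `c(2-q)² = m(γ+1)^q`.
Elsewhere `r` is bounded below, so `m|∇ψ|^q` is bounded by a constant `K`, while `ψ ≥ M` on the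
unit disc gives `a e^(bψ) ≥ a e^(bM) ≥ K` for `M = K/(ab)`.
-/

open Filter Topology

section RadialCalculus

variable {E : Type*} [NormedAddCommGroup E] [InnerProductSpace ℝ E] {x : E}

theorem hasFDerivAt_norm_of_ne_zero (hx : x ≠ 0) :
    HasFDerivAt (‖·‖) (‖x‖⁻¹ • innerSL ℝ x) x := by
  have hsq := (Real.hasDerivAt_sqrt (pow_ne_zero 2 (norm_ne_zero_iff.2 hx))).comp_hasFDerivAt x
    (hasStrictFDerivAt_norm_sq x).hasFDerivAt
  refine (hsq.congr_of_eventuallyEq (.of_forall fun y => ?_)).congr_fderiv ?_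
  · simp [Real.sqrt_sq (norm_nonneg y)]
  · rw [Real.sqrt_sq (norm_nonneg x), two_nsmul, smul_add, ← add_smul]
    congr 1
    field_simp
    ring

variable {φ : ℝ → ℝ}

theorem HasDerivAt.hasFDerivAt_comp_norm {φ' : ℝ} (hx : x ≠ 0) (hφ : HasDerivAt φ φ' ‖x‖) :
    HasFDerivAt (fun y : E => φ ‖y‖) ((φ' / ‖x‖) • innerSL ℝ x) x := by
  refine (hφ.comp_hasFDerivAt x (hasFDerivAt_norm_of_ne_zero hx)).congr_fderiv ?_
  rw [smul_smul, div_eq_mul_inv]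

theorem HasDerivAt.hasGradientAt_comp_norm [CompleteSpace E] {φ' : ℝ} (hx : x ≠ 0)
    (hφ : HasDerivAt φ φ' ‖x‖) :
    HasGradientAt (fun y : E => φ ‖y‖) ((φ' / ‖x‖) • x) x := by
  rw [hasGradientAt_iff_hasFDerivAt, map_smul]
  exact hφ.hasFDerivAt_comp_norm hx

theorem norm_gradient_comp_norm [CompleteSpace E] {φ' : ℝ} (hx : x ≠ 0)
    (hφ : HasDerivAt φ φ' ‖x‖) :
    ‖gradient (fun y : E => φ ‖y‖) x‖ = |φ'| := by
  rw [(hφ.hasGradientAt_comp_norm hx).gradient, norm_smul, Real.norm_eq_abs, abs_div,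
    abs_norm, div_mul_cancel₀ _ (norm_ne_zero_iff.2 hx)]

theorem fderiv_fderiv_comp_norm_apply {φ' : ℝ → ℝ} {φ'' : ℝ} (hx : x ≠ 0)
    (hφ : ∀ᶠ t in 𝓝 ‖x‖, HasDerivAt φ (φ' t) t) (hφ' : HasDerivAt φ' φ'' ‖x‖) (v w : E) :
    fderiv ℝ (fderiv ℝ (fun y : E => φ ‖y‖)) x v w =
      φ' ‖x‖ / ‖x‖ * inner ℝ v w
        + (φ'' - φ' ‖x‖ / ‖x‖) / ‖x‖ ^ 2 * inner ℝ x v * inner ℝ x w := by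
  have hr : ‖x‖ ≠ 0 := norm_ne_zero_iff.2 hx
  have hfderiv : fderiv ℝ (fun y : E => φ ‖y‖) =ᶠ[𝓝 x]
      fun y => (φ' ‖y‖ / ‖y‖) • innerSL ℝ y := by
    filter_upwards [continuous_norm.continuousAt.preimage_mem_nhds hφ,
      isOpen_compl_singleton.mem_nhds hx] with y hy hy0
    exact (HasDerivAt.hasFDerivAt_comp_norm hy0 hy).fderiv
  have hcoef : HasDerivAt (fun t => φ' t / t) ((φ'' - φ' ‖x‖ / ‖x‖) / ‖x‖) ‖x‖ := by
    refine (hφ'.div (hasDerivAt_id _) hr).congr_deriv ?_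
    simp only [id]
    field_simp
  have hD : HasFDerivAt (fun y : E => (φ' ‖y‖ / ‖y‖) • innerSL ℝ y) _ x :=
    (hcoef.hasFDerivAt_comp_norm hx).smul (innerSL ℝ (E := E)).hasFDerivAt
  rw [hfderiv.fderiv_eq, hD.fderiv]
  simp only [add_apply, smul_apply, ContinuousLinearMap.smulRight_apply, coe_innerSL_apply,
    smul_eq_mul]
  field_simp
  rw [innerSL_apply_apply]

end RadialCalculus

theorem laplacian_comp_norm {n : ℕ} {φ φ' : ℝ → ℝ} {φ'' : ℝ} {x : EuclideanSpace ℝ (Fin n)}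
    (hx : x ≠ 0) (hφ : ∀ᶠ t in 𝓝 ‖x‖, HasDerivAt φ (φ' t) t) (hφ' : HasDerivAt φ' φ'' ‖x‖) :
    laplacian (fun y => φ ‖y‖) x = φ'' + (n - 1) * (φ' ‖x‖ / ‖x‖) := by
  have hr : ‖x‖ ≠ 0 := norm_ne_zero_iff.2 hx
  have hsum : ∑ i, x i * x i = ‖x‖ ^ 2 := by
    simp only [EuclideanSpace.real_norm_sq_eq x, pow_two]
  simp only [laplacian, iteratedFDeriv_two_apply, Matrix.cons_val_zero, Matrix.cons_val_one,
    fderiv_fderiv_comp_norm_apply hx hφ hφ', EuclideanSpace.inner_single_right, PiLp.single_apply,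
    if_true, conj_trivial, one_mul, mul_one, Finset.sum_add_distrib, Finset.sum_const,
    Finset.card_univ, Fintype.card_fin, nsmul_eq_mul, mul_assoc, ← Finset.mul_sum, hsum]
  field_simp
  ring

noncomputable def logPowProfile (γ c M p r : ℝ) : ℝ :=
  γ * log (1 / r) + c * (1 - r ^ p) + M

section LogPowProfile

variable (γ c M p : ℝ)

theorem hasDerivAt_logPowProfile {r : ℝ} (hr : 0 < r) :
    HasDerivAt (logPowProfile γ c M p) (-(γ / r) - c * p * r ^ (p - 1)) r := by
  have hlog : HasDerivAt (fun r => log (1 / r)) (-r⁻¹) r := by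
    simp only [one_div, Real.log_inv]
    exact (Real.hasDerivAt_log hr.ne').fun_neg
  refine (((hlog.const_mul γ).fun_add (((hasDerivAt_const r 1).fun_sub
    (Real.hasDerivAt_rpow_const (p := p) (Or.inl hr.ne'))).const_mul c)).add_const M).congr_deriv ?_
  ring

theorem hasDerivAt_logPowProfile_deriv {r : ℝ} (hr : 0 < r) :
    HasDerivAt (fun r => -(γ / r) - c * p * r ^ (p - 1))
      (γ / r ^ 2 - c * p * (p - 1) * r ^ (p - 2)) r := by
  have hinv : HasDerivAt (fun r => γ / r) (-(γ / r ^ 2)) r := by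
    simpa only [div_eq_mul_inv, mul_neg] using (hasDerivAt_inv hr.ne').const_mul γ
  refine (hinv.fun_neg.fun_sub ((Real.hasDerivAt_rpow_const (p := p - 1)
    (Or.inl hr.ne')).const_mul (c * p))).congr_deriv ?_
  rw [show p - 1 - 1 = p - 2 by ring]
  ring

theorem laplacian_logPowProfile {x : EuclideanSpace ℝ (Fin 2)} (hx : x ≠ 0) :
    laplacian (fun y => logPowProfile γ c M p ‖y‖) x = -(c * p ^ 2) * ‖x‖ ^ (p - 2) := by
  have hr : 0 < ‖x‖ := norm_pos_iff.2 hx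
  have hφ : ∀ᶠ t in 𝓝 ‖x‖,
      HasDerivAt (logPowProfile γ c M p) (-(γ / t) - c * p * t ^ (p - 1)) t :=
    (eventually_gt_nhds hr).mono fun t ht => hasDerivAt_logPowProfile γ c M p ht
  rw [laplacian_comp_norm hx hφ (hasDerivAt_logPowProfile_deriv γ c p hr)]
  have hpow : ‖x‖ ^ (p - 1) = ‖x‖ ^ (p - 2) * ‖x‖ := by
    rw [← Real.rpow_add_one hr.ne']; ring_nf
  rw [hpow]
  field_simp
  ring

theorem norm_gradient_logPowProfile (hγ : 0 ≤ γ) (hc : 0 ≤ c) (hp : 0 ≤ p)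
    {x : EuclideanSpace ℝ (Fin 2)} (hx : x ≠ 0) :
    ‖gradient (fun y => logPowProfile γ c M p ‖y‖) x‖ = (γ + c * p * ‖x‖ ^ p) / ‖x‖ := by
  have hr : 0 < ‖x‖ := norm_pos_iff.2 hx
  rw [norm_gradient_comp_norm hx (hasDerivAt_logPowProfile γ c M p hr),
    Real.rpow_sub_one hr.ne' p]
  have hnonneg : 0 ≤ γ / ‖x‖ + c * p * (‖x‖ ^ p / ‖x‖) := by positivity
  rw [abs_of_nonpos (by linarith)]
  ring

theorem le_logPowProfile {r : ℝ} (hγ : 0 ≤ γ) (hc : 0 ≤ c) (hp : 0 ≤ p) (hr0 : 0 < r)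
    (hr1 : r ≤ 1) : M ≤ logPowProfile γ c M p r := by
  have hlog : 0 ≤ γ * log (1 / r) := mul_nonneg hγ (Real.log_nonneg (one_le_one_div hr0 hr1))
  have hpow : 0 ≤ c * (1 - r ^ p) :=
    mul_nonneg hc (sub_nonneg.2 (Real.rpow_le_one hr0.le hr1 hp))
  unfold logPowProfile
  linarith

end LogPowProfile

theorem rpow_neg_le_of_one_lt_mul_rpow {A p q r : ℝ} (hr : 0 < r) (hp : 0 < p) (hq : 0 ≤ q)
    (h : 1 < A * r ^ p) : r ^ (-q) ≤ A ^ (q / p) := by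
  have hrp : 0 < r ^ p := Real.rpow_pos_of_pos hr p
  have hinv : (r ^ p)⁻¹ ≤ A := by
    rw [inv_le_iff_one_le_mul₀ hrp]; linarith
  calc r ^ (-q) = ((r ^ p)⁻¹) ^ (q / p) := by
        rw [← Real.rpow_neg hr.le, ← Real.rpow_mul hr.le]
        field_simp
    _ ≤ A ^ (q / p) := Real.rpow_le_rpow (inv_nonneg.2 hrp.le) hinv (by positivity)

theorem le_mul_exp_mul_div {a b K : ℝ} (ha : 0 < a) (hb : b ≠ 0) :
    K ≤ a * exp (b * (K / (a * b))) := by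
  have h := Real.add_one_le_exp (b * (K / (a * b)))
  have hbK : b * (K / (a * b)) = K / a := by field_simp
  rw [hbK] at h ⊢
  rw [← div_le_iff₀' ha]
  linarith

theorem logPowProfile_supersolution_inequality {m a b q γ c M r : ℝ} (hm : 0 < m) (ha : 0 < a)
    (hb : 0 < b) (hq1 : 1 < q) (hq2 : q < 2) (hγ : 0 < γ) (hc : c * (2 - q) ^ 2 = m * (γ + 1) ^ q)
    (hM : m * (c * (2 - q)) ^ (q / (2 - q)) * (γ + c * (2 - q)) ^ q ≤ a * exp (b * M))
    (hr0 : 0 < r) (hr1 : r < 1) :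
    m * ((γ + c * (2 - q) * r ^ (2 - q)) / r) ^ q ≤
      c * (2 - q) ^ 2 * r ^ (-q) + a * exp (b * logPowProfile γ c M (2 - q) r) := by
  have hp : 0 < 2 - q := by linarith
  have hc0 : 0 < c := by
    have : 0 < c * (2 - q) ^ 2 := hc ▸ by positivity
    exact pos_of_mul_pos_left this (by positivity)
  set A := c * (2 - q)
  set t := r ^ (2 - q)
  have hA : 0 < A := by positivity
  have ht0 : 0 < t := Real.rpow_pos_of_pos hr0 _
  have ht1 : t ≤ 1 := Real.rpow_le_one hr0.le hr1.le hp.le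
  have hB : 0 ≤ γ + A * t := by positivity
  have hgrad : ((γ + A * t) / r) ^ q = (γ + A * t) ^ q * r ^ (-q) := by
    rw [Real.div_rpow hB hr0.le, Real.rpow_neg hr0.le, div_eq_mul_inv]
  have hexp : a * exp (b * M) ≤ a * exp (b * logPowProfile γ c M (2 - q) r) := by
    gcongr
    exact le_logPowProfile γ c M (2 - q) hγ.le hc0.le hp.le hr0 hr1.le
  rw [hgrad]
  by_cases hsmall : A * t ≤ 1
  · have hBq : (γ + A * t) ^ q ≤ (γ + 1) ^ q := by gcongr
    have : m * (γ + A * t) ^ q * r ^ (-q) ≤ c * (2 - q) ^ 2 * r ^ (-q) := by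
      rw [hc]; gcongr
    have : 0 < a * exp (b * logPowProfile γ c M (2 - q) r) := by positivity
    linarith
  · have hrq_le : r ^ (-q) ≤ A ^ (q / (2 - q)) :=
      rpow_neg_le_of_one_lt_mul_rpow hr0 hp (by linarith) (not_le.1 hsmall)
    have hBq : (γ + A * t) ^ q ≤ (γ + A) ^ q := by
      gcongr
      exact mul_le_of_le_one_right hA.le ht1
    have : m * (γ + A * t) ^ q * r ^ (-q) ≤ m * A ^ (q / (2 - q)) * (γ + A) ^ q := by
      rw [mul_right_comm]; gcongr
    have : 0 ≤ c * (2 - q) ^ 2 * r ^ (-q) := by positivity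
    linarith

theorem stmt11_general (m a b q γ : ℝ) (hm : 0 < m) (ha : 0 < a) (hb : 0 < b)
    (hq1 : 1 < q) (hq2 : q < 2) (hγ : 0 < γ) :
    ∃ c > 0, ∃ M > 0, ∀ ψ : EuclideanSpace ℝ (Fin 2) → ℝ,
      (∀ x, ψ x = γ * Real.log (1 / ‖x‖) + c * (1 - ‖x‖ ^ (2 - q)) + M) →
      ∀ x : EuclideanSpace ℝ (Fin 2), 0 < ‖x‖ → ‖x‖ < 1 →
        0 ≤ -(laplacian ψ x) + a * Real.exp (b * ψ x) - m * ‖gradient ψ x‖ ^ q := by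
  have hp : 0 < 2 - q := by linarith
  set c := m * (γ + 1) ^ q / (2 - q) ^ 2
  have hc : 0 < c := by positivity
  set K := m * (c * (2 - q)) ^ (q / (2 - q)) * (γ + c * (2 - q)) ^ q
  refine ⟨c, hc, K / (a * b), by positivity, fun ψ hψ x hx0 hx1 => ?_⟩
  obtain rfl : ψ = fun y => logPowProfile γ c (K / (a * b)) (2 - q) ‖y‖ := funext hψ
  have hx : x ≠ 0 := norm_pos_iff.1 hx0
  rw [laplacian_logPowProfile _ _ _ _ hx, sub_sub_cancel_left,
    norm_gradient_logPowProfile _ _ _ _ hγ.le hc.le hp.le hx]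
  have := logPowProfile_supersolution_inequality (c := c) hm ha hb hq1 hq2 hγ
    (div_mul_cancel₀ _ (by positivity))
    (le_mul_exp_mul_div ha hb.ne') hx0 hx1
  beta_reduce
  linarith

/-- For `1 < q < 2`, `m,a,b > 0` and `γ ∈ (0, 2/b]`, there exist `c, M > 0` such that
`ψ(x) = γ ln(1/|x|) + c(1-|x|^{2-q}) + M` is a supersolution:
`-Δψ + a e^{bψ} - m|∇ψ|^q ≥ 0` in `B₁ \ {0} ⊂ ℝ²`. -/
theorem stmt11 (m a b q γ : ℝ) (hm : 0 < m) (ha : 0 < a) (hb : 0 < b)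
    (hq1 : 1 < q) (hq2 : q < 2) (hγ : 0 < γ) (hγ2 : γ ≤ 2 / b) :
    ∃ c > 0, ∃ M > 0, ∀ ψ : EuclideanSpace ℝ (Fin 2) → ℝ,
      (∀ x, ψ x = γ * Real.log (1 / ‖x‖) + c * (1 - ‖x‖ ^ (2 - q)) + M) →
      ∀ x : EuclideanSpace ℝ (Fin 2), 0 < ‖x‖ → ‖x‖ < 1 →
        0 ≤ -(laplacian ψ x) + a * Real.exp (b * ψ x) - m * ‖gradient ψ x‖ ^ q :=
  stmt11_general m a b q γ hm ha hb hq1 hq2 hγ
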